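/- arXiv:1808.07226 — 2 statements merged into one kernel-verified Lean document; each statement's English description precedes it below -/
import Mathlib

section
/- Let X_1,…,X_n be jointly distributed random variables taking values in a finite set, let V = [n], and let S ⊆ V be any subset. Then for every k with 2 ≤ k ≤ n, E_{F ∼ Unif(V choose k)} [C(X_F | X_S)] = Σ_{r=2}^{k} (k choose r) (−1)^r E_{R ∼ Unif(V choose r)} [I(X_R | X_S)], where the expectations are over uniformly random subsets of V of the indicated sizes. -/
/-!
The conditional entropies `h T = H(X_T | X_S)` satisfy `h ∅ = 0`, and `I(X_R | X_S)` is an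
alternating transform of `h` over the subsets of `R`. Since `∑_{T ⊆ R ⊆ F} (-1)^|R|` vanishes
unless `T = F`, Möbius inversion on the Boolean lattice gives
`∑_{R ⊆ F} (-1)^|R| I(X_R | X_S) = -h F`; the terms with `|R| ≤ 1` contribute `-∑_{i ∈ F} h {i}`,
so `C(X_F | X_S) = ∑_{R ⊆ F, |R| ≥ 2} (-1)^|R| I(X_R | X_S)` for every single `F`.
Averaging over the `k`-sets `F`, each `r`-set lies in `C(n-r, k-r)` of them, and
`C(n-r, k-r) / C(n, k) = C(k, r) / C(n, r)`.
-/

open Finset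

noncomputable section
open scoped Classical

/-- A probability mass function on a finite type. -/
def IsDist {Ω : Type*} [Fintype Ω] (μ : Ω → ℝ) : Prop :=
  (∀ x, 0 ≤ μ x) ∧ ∑ x, μ x = 1

variable {n : ℕ} {α : Type*} [Fintype α] [Nonempty α]

/-- Marginal probability that the coordinates in `A` agree with `y`. -/
def marg (μ : (Fin n → α) → ℝ) (A : Finset (Fin n)) (y : Fin n → α) : ℝ :=
  ∑ x : Fin n → α, if ∀ i ∈ A, x i = y i then μ x else 0

/-- Shannon entropy (natural log) of the marginal of `μ` on the coordinates in `A`,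
i.e. `H(X_A)`; the sum ranges over canonical representatives of assignments to `A`. -/
def margEnt (μ : (Fin n → α) → ℝ) (A : Finset (Fin n)) : ℝ :=
  -∑ y ∈ Finset.univ.filter (fun y : Fin n → α => ∀ i ∉ A, y i = Classical.arbitrary α),
      marg μ A y * Real.log (marg μ A y)

/-- Conditional entropy `H(X_F | X_S) = H(X_{F∪S}) − H(X_S)`. -/
def condEnt (μ : (Fin n → α) → ℝ) (F S : Finset (Fin n)) : ℝ :=
  margEnt μ (F ∪ S) - margEnt μ S

/-- Conditional multivariate total correlation
`C(X_F | X_S) = ∑_{i∈F} H(X_i | X_S) − H(X_F | X_S)`. -/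
def condTC (μ : (Fin n → α) → ℝ) (F S : Finset (Fin n)) : ℝ :=
  (∑ i ∈ F, condEnt μ {i} S) - condEnt μ F S

/-- Conditional multivariate mutual information
`I(X_R | X_S) = ∑_{∅ ≠ T ⊆ R} (−1)^{|T|−1} H(X_T | X_S)`. -/
def condMI (μ : (Fin n → α) → ℝ) (R S : Finset (Fin n)) : ℝ :=
  ∑ T ∈ R.powerset.filter (fun T => T.Nonempty),
      (-1 : ℝ) ^ (T.card + 1) * condEnt μ T S


namespace Finset

variable {ι R : Type*} [DecidableEq ι] [CommRing R]

theorem sum_Icc_neg_one_pow_card {s t : Finset ι} (hst : s ⊆ t) :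
    ∑ u ∈ Icc s t, (-1 : R) ^ #u = if s = t then (-1) ^ #t else 0 := by
  have hdisj : ∀ v ∈ (t \ s).powerset, Disjoint s v := fun v hv =>
    disjoint_of_subset_right (mem_powerset.1 hv) disjoint_sdiff
  rw [Icc_eq_image_powerset hst, sum_image fun v hv w hw hvw => by
    rw [← union_sdiff_cancel_left (hdisj v hv), hvw, union_sdiff_cancel_left (hdisj w hw)]]
  have hsplit : ∀ v ∈ (t \ s).powerset, (-1 : R) ^ #(s ∪ v) = (-1) ^ #s * (-1) ^ #v :=
    fun v hv => by rw [card_union_of_disjoint (hdisj v hv), pow_add]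
  have hcancel : ∑ v ∈ (t \ s).powerset, (-1 : R) ^ #v = if s = t then 1 else 0 := by
    have hiff : t \ s = ∅ ↔ s = t := by
      rw [sdiff_eq_empty_iff_subset]
      exact ⟨hst.antisymm, fun h => h ▸ subset_rfl⟩
    have := congrArg (Int.cast : ℤ → R) (sum_powerset_neg_one_pow_card (x := t \ s))
    push_cast at this
    simpa only [hiff] using this
  rw [sum_congr rfl hsplit, ← mul_sum, hcancel]
  split_ifs with h <;> simp [h]

theorem sum_powersetCard_sum_powersetCard {M : Type*} [AddCommMonoid M] (s : Finset ι)
    {r k : ℕ} (hrk : r ≤ k) (g : Finset ι → M) :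
    ∑ u ∈ powersetCard k s, ∑ t ∈ powersetCard r u, g t
      = (#s - r).choose (k - r) • ∑ t ∈ powersetCard r s, g t := by
  rw [sum_comm' (t' := powersetCard r s) (s' := fun t => (powersetCard k s).filter (t ⊆ ·))
    (by intro u t; simp only [mem_powersetCard, mem_filter]; grind), smul_sum]
  refine sum_congr rfl fun t ht => ?_
  obtain ⟨hts, rfl⟩ := mem_powersetCard.1 ht
  rw [sum_const, card_filter_powersetCard_subset t s k hts hrk]

end Finset

open Finset

section Coinformation

variable {ι R : Type*} [CommRing R]

def coinformation (h : Finset ι → R) (s : Finset ι) : R :=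
  ∑ t ∈ s.powerset.filter (fun t => t.Nonempty), (-1) ^ (#t + 1) * h t

variable {h : Finset ι → R}

@[simp]
theorem coinformation_empty : coinformation h ∅ = 0 :=
  rfl

theorem coinformation_eq_sum_powerset (h0 : h ∅ = 0) (s : Finset ι) :
    coinformation h s = ∑ t ∈ s.powerset, (-1) ^ (#t + 1) * h t :=
  sum_filter_of_ne fun t _ ht => nonempty_iff_ne_empty.2 fun he => ht (by simp [he, h0])

variable [DecidableEq ι]

@[simp]
theorem coinformation_singleton (i : ι) : coinformation h {i} = h {i} := by
  have : ({i} : Finset ι).powerset.filter (fun t => t.Nonempty) = {{i}} := by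
    ext t
    simp [subset_singleton_iff, nonempty_iff_ne_empty]
    grind [singleton_ne_empty]
  simp [coinformation, this]

theorem sum_powerset_neg_one_pow_mul_coinformation (h0 : h ∅ = 0) (s : Finset ι) :
    ∑ t ∈ s.powerset, (-1) ^ #t * coinformation h t = -h s := by
  simp_rw [coinformation_eq_sum_powerset h0, mul_sum]
  rw [sum_comm' (t' := s.powerset) (s' := fun u => Icc u s)
    (by intro t u; simp only [mem_powerset, mem_Icc]; grind)]
  have hinner : ∀ u ∈ s.powerset, ∑ t ∈ Icc u s, (-1) ^ #t * ((-1) ^ (#u + 1) * h u)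
      = if u = s then -h s else 0 := fun u hu => by
    rw [← sum_mul, sum_Icc_neg_one_pow_card (mem_powerset.1 hu)]
    split_ifs with hus
    · subst hus
      rw [← mul_assoc, ← pow_add, Odd.neg_one_pow ⟨#u, by ring⟩, neg_one_mul]
    · exact zero_mul _
  rw [sum_congr rfl hinner, sum_ite_eq' s.powerset s, if_pos (mem_powerset_self s)]

theorem sum_singleton_sub_eq_sum_coinformation (h0 : h ∅ = 0) (s : Finset ι) :
    ∑ i ∈ s, h {i} - h s
      = ∑ r ∈ Icc 2 #s, (-1) ^ r * ∑ t ∈ powersetCard r s, coinformation h t := by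
  have hgraded : ∑ t ∈ s.powerset, (-1) ^ #t * coinformation h t
      = ∑ r ∈ range (#s + 1), (-1) ^ r * ∑ t ∈ powersetCard r s, coinformation h t := by
    rw [sum_powerset]
    refine sum_congr rfl fun r _ => ?_
    rw [mul_sum]
    exact sum_congr rfl fun t ht => by rw [(mem_powersetCard.1 ht).2]
  rcases s.eq_empty_or_nonempty with rfl | hs
  · simp [h0]
  have h2 : 2 ≤ #s + 1 := Nat.succ_le_succ hs.card_pos
  rw [sum_powerset_neg_one_pow_mul_coinformation h0, ← sum_range_add_sum_Ico _ h2,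
    Ico_add_one_right_eq_Icc, sum_range_succ, sum_range_one, powersetCard_zero,
    powersetCard_one, sum_map] at hgraded
  simp only [sum_singleton, coinformation_empty, Function.Embedding.coeFn_mk,
    coinformation_singleton] at hgraded
  linear_combination hgraded

end Coinformation

theorem condEnt_empty_left (μ : (Fin n → α) → ℝ) (S : Finset (Fin n)) : condEnt μ ∅ S = 0 := by
  simp [condEnt]

theorem condMI_eq_coinformation (μ : (Fin n → α) → ℝ) (R S : Finset (Fin n)) :
    condMI μ R S = coinformation (condEnt μ · S) R :=
  rfl

theorem condTC_eq_sum_Icc_neg_one_pow_mul_sum_condMI (μ : (Fin n → α) → ℝ)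
    (F S : Finset (Fin n)) :
    condTC μ F S = ∑ r ∈ Icc 2 #F, (-1) ^ r * ∑ R ∈ powersetCard r F, condMI μ R S := by
  simp only [condTC, condMI_eq_coinformation]
  exact sum_singleton_sub_eq_sum_coinformation (h := (condEnt μ · S)) (condEnt_empty_left μ S) F

theorem tc_as_alternating_sum_of_mi_general (μ : (Fin n → α) → ℝ)
    (S : Finset (Fin n)) (k : ℕ) (hkn : k ≤ n) :
    (∑ F ∈ Finset.powersetCard k (Finset.univ : Finset (Fin n)), condTC μ F S)
        / (n.choose k : ℝ)
      = ∑ r ∈ Finset.Icc 2 k, (k.choose r : ℝ) * (-1 : ℝ) ^ r *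
          ((∑ R ∈ Finset.powersetCard r (Finset.univ : Finset (Fin n)), condMI μ R S)
            / (n.choose r : ℝ)) := by
  have hF : ∀ F ∈ powersetCard k (univ : Finset (Fin n)),
      condTC μ F S = ∑ r ∈ Icc 2 k, (-1) ^ r * ∑ R ∈ powersetCard r F, condMI μ R S :=
    fun F hF => by rw [condTC_eq_sum_Icc_neg_one_pow_mul_sum_condMI, (mem_powersetCard.1 hF).2]
  rw [sum_congr rfl hF, sum_comm, sum_div]
  refine sum_congr rfl fun r hr => ?_
  have hrk : r ≤ k := (mem_Icc.1 hr).2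
  rw [← mul_sum, sum_powersetCard_sum_powersetCard _ hrk, card_univ, Fintype.card_fin,
    nsmul_eq_mul]
  have hnk : (n.choose k : ℝ) ≠ 0 := by exact_mod_cast (Nat.choose_pos hkn).ne'
  have hnr : (n.choose r : ℝ) ≠ 0 := by exact_mod_cast (Nat.choose_pos (hrk.trans hkn)).ne'
  have hchoose : ((n - r).choose (k - r) : ℝ) * n.choose r = k.choose r * n.choose k := by
    exact_mod_cast by rw [mul_comm, mul_comm (k.choose r), Nat.choose_mul hrk]
  field_simp
  linear_combination (∑ R ∈ powersetCard r univ, condMI μ R S) * hchoose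

/-- The identity
`E_{F ∼ (V choose k)}[C(X_F|X_S)] = ∑_{r=2}^k (k choose r)(−1)^r E_{R ∼ (V choose r)}[I(X_R|X_S)]`. -/
theorem tc_as_alternating_sum_of_mi (μ : (Fin n → α) → ℝ) (hμ : IsDist μ)
    (S : Finset (Fin n)) (k : ℕ) (hk2 : 2 ≤ k) (hkn : k ≤ n) :
    (∑ F ∈ Finset.powersetCard k (Finset.univ : Finset (Fin n)), condTC μ F S)
        / (n.choose k : ℝ)
      = ∑ r ∈ Finset.Icc 2 k, (k.choose r : ℝ) * (-1 : ℝ) ^ r *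
          ((∑ R ∈ Finset.powersetCard r (Finset.univ : Finset (Fin n)), condMI μ R S)
            / (n.choose r : ℝ)) :=
  tc_as_alternating_sum_of_mi_general μ S k hkn

end
end

section
/- Let X_1,…,X_n be jointly distributed random variables taking values in a finite set, let V = [n], and fix t and a subset S ∈ (V choose t). Then for any k ≤ n − t, E_{F ∼ Unif(V choose k)} [C(X_F | X_S)] ≤ E_{E ∼ Unif((V∖S) choose k)} [C(X_E | X_S)], where F is a uniformly random k-subset of V and E is a uniformly random k-subset of V∖S. -/
open Finset

noncomputable section
open scoped Classical

variable {n : ℕ} {α : Type*} [Fintype α] [Nonempty α]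

/-!
Given `X_S`, the map `F ↦ C(X_F | X_S)` ignores the coordinates in `S`, and on subsets of `V ∖ S`
it is monotone: adding `i ∉ E ∪ S` to `E` raises it by `H(X_i | X_S) - H(X_i | X_{E ∪ S}) ≥ 0`,
an instance of submodularity of entropy. Submodularity is `log r ≤ r - 1` for the ratio
`r = p_A p_B / (p_{A ∪ B} p_{A ∩ B})` of marginals, whose `μ`-mean is at most one.

For `G` monotone on subsets of `U`, the average of `G` over `j`-subsets is at most its average over
`(j + 1)`-subsets (double count the pairs `E ⊂ F`). If `G` ignores `s ∉ U`, the average over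
`k`-subsets of `U ∪ {s}` is a mixture of the `k`- and `(k - 1)`-level averages on `U`, hence at
most the former. Adding the points of `S` to `V ∖ S` one at a time gives the theorem.
-/

section Marginal

variable {β : Type*} [Fintype β] {μ : (Fin n → β) → ℝ}

theorem marg_nonneg (h0 : ∀ x, 0 ≤ μ x) (A : Finset (Fin n)) (y : Fin n → β) :
    0 ≤ marg μ A y :=
  sum_nonneg fun x _ => by split_ifs <;> simp [h0 x]

theorem le_marg (h0 : ∀ x, 0 ≤ μ x) (A : Finset (Fin n)) (x : Fin n → β) :
    μ x ≤ marg μ A x := by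
  have := single_le_sum (f := fun x' => if ∀ i ∈ A, x' i = x i then μ x' else 0)
    (fun x' _ => by split_ifs <;> simp [h0 x']) (mem_univ x)
  simpa [marg] using this

theorem marg_congr {A : Finset (Fin n)} {x y : Fin n → β} (h : ∀ i ∈ A, x i = y i) :
    marg μ A x = marg μ A y := by
  unfold marg
  congr! 2 with x'
  exact forall₂_congr fun i hi => by rw [h i hi]

theorem sum_agree_div_marg_le (h0 : ∀ x, 0 ≤ μ x) (A B : Finset (Fin n)) (x' x'' : Fin n → β) :
    ∑ x, (if (∀ i ∈ A, x' i = x i) ∧ ∀ i ∈ B, x'' i = x i then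
        μ x / (marg μ (A ∪ B) x * marg μ (A ∩ B) x) else 0)
      ≤ if ∀ i ∈ A ∩ B, x'' i = x' i then (marg μ (A ∩ B) x')⁻¹ else 0 := by
  by_cases hglue : ∃ x₀ : Fin n → β, (∀ i ∈ A, x' i = x₀ i) ∧ ∀ i ∈ B, x'' i = x₀ i
  · obtain ⟨x₀, hA, hB⟩ := hglue
    have hM : ∀ i ∈ A ∩ B, x'' i = x' i := fun i hi => by
      rw [mem_inter] at hi
      rw [hB i hi.2, hA i hi.1]
    -- The sum runs over the fibre of `x₀` under projection to `A ∪ B`.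
    have hfiber (x : Fin n → β) :
        ((∀ i ∈ A, x' i = x i) ∧ ∀ i ∈ B, x'' i = x i) ↔ ∀ i ∈ A ∪ B, x i = x₀ i := by
      simp only [mem_union]
      constructor
      · rintro ⟨hxA, hxB⟩ i (hi | hi)
        · rw [← hxA i hi, hA i hi]
        · rw [← hxB i hi, hB i hi]
      · intro hx
        exact ⟨fun i hi => by rw [hx i (.inl hi), hA i hi],
          fun i hi => by rw [hx i (.inr hi), hB i hi]⟩
    rw [if_pos hM]
    calc _ = (∑ x, if ∀ i ∈ A ∪ B, x i = x₀ i then μ x else 0)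
          / (marg μ (A ∪ B) x₀ * marg μ (A ∩ B) x') := by
          rw [sum_div]
          refine sum_congr rfl fun x _ => ?_
          rw [if_congr (hfiber x) rfl rfl]
          split_ifs with hx
          · rw [marg_congr hx, marg_congr fun i hi =>
              (((hfiber x).2 hx).1 i (mem_of_mem_inter_left hi)).symm]
          · rw [zero_div]
      _ ≤ (marg μ (A ∩ B) x')⁻¹ := by
          change marg μ (A ∪ B) x₀ / _ ≤ _
          rcases (marg_nonneg h0 (A ∪ B) x₀).eq_or_lt with hp | hp
          · rw [← hp, zero_div]
            exact inv_nonneg.mpr (marg_nonneg h0 _ _)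
          · rw [div_mul_cancel_left₀ hp.ne']
  · rw [sum_eq_zero fun x _ => if_neg fun h => hglue ⟨x, h⟩]
    split_ifs
    exacts [inv_nonneg.mpr (marg_nonneg h0 _ _), le_rfl]

theorem sum_mul_marg_div_marg_le_one (hμ : IsDist μ) (A B : Finset (Fin n)) :
    ∑ x, μ x * (marg μ A x * marg μ B x / (marg μ (A ∪ B) x * marg μ (A ∩ B) x)) ≤ 1 := by
  obtain ⟨h0, h1⟩ := hμ
  set q : (Fin n → β) → ℝ := fun x => μ x / (marg μ (A ∪ B) x * marg μ (A ∩ B) x) with hq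
  have hexpand (x : Fin n → β) :
      μ x * (marg μ A x * marg μ B x / (marg μ (A ∪ B) x * marg μ (A ∩ B) x))
        = ∑ x', ∑ x'', μ x' * μ x'' *
            if (∀ i ∈ A, x' i = x i) ∧ ∀ i ∈ B, x'' i = x i then q x else 0 := by
    rw [show μ x * (marg μ A x * marg μ B x / (marg μ (A ∪ B) x * marg μ (A ∩ B) x))
      = marg μ A x * marg μ B x * q x by simp only [hq]; ring]
    unfold marg
    rw [sum_mul_sum, sum_mul]
    refine sum_congr rfl fun x' _ => ?_
    rw [sum_mul]
    refine sum_congr rfl fun x'' _ => ?_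
    split_ifs <;> simp_all
  calc _ = ∑ x', ∑ x'', μ x' * μ x'' * ∑ x,
        if (∀ i ∈ A, x' i = x i) ∧ ∀ i ∈ B, x'' i = x i then q x else 0 := by
        simp_rw [hexpand, mul_sum]
        rw [sum_comm]
        exact sum_congr rfl fun _ _ => sum_comm
    _ ≤ ∑ x', ∑ x'', μ x' * μ x'' *
        if ∀ i ∈ A ∩ B, x'' i = x' i then (marg μ (A ∩ B) x')⁻¹ else 0 := by
        gcongr with x' _ x'' _
        · exact mul_nonneg (h0 x') (h0 x'')
        · exact sum_agree_div_marg_le h0 A B x' x''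
    _ = ∑ x', μ x' * (marg μ (A ∩ B) x' * (marg μ (A ∩ B) x')⁻¹) := by
        refine sum_congr rfl fun x' _ => ?_
        simp only [marg, sum_mul, mul_sum]
        refine sum_congr rfl fun x'' _ => ?_
        split_ifs <;> ring
    _ ≤ ∑ x', μ x' := by
        gcongr with x' _
        exact mul_le_of_le_one_right (h0 x') (mul_inv_le_one)
    _ = 1 := h1

end Marginal

theorem margEnt_eq_neg_sum (μ : (Fin n → α) → ℝ) (A : Finset (Fin n)) :
    margEnt μ A = -∑ x, μ x * Real.log (marg μ A x) := by
  set rep : (Fin n → α) → Fin n → α := fun x => A.piecewise x fun _ => Classical.arbitrary α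
  have hrep (x : Fin n → α) : marg μ A (rep x) = marg μ A x :=
    marg_congr fun i hi => by simp [rep, hi]
  unfold margEnt marg
  simp_rw [sum_mul, ite_mul, zero_mul]
  rw [sum_comm]
  congr 1
  refine sum_congr rfl fun x _ => ?_
  rw [sum_eq_single_of_mem (rep x)
    (mem_filter.mpr ⟨mem_univ _, fun i hi => by simp [rep, hi]⟩)]
  · rw [if_pos (fun i hi => by simp [rep, hi])]
    exact congrArg _ (congrArg _ (hrep x))
  · intro y hy hne
    refine if_neg fun hxy => hne (funext fun i => ?_)
    by_cases hi : i ∈ A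
    · simp [rep, hi, hxy i hi]
    · simp [rep, hi, (mem_filter.mp hy).2 i hi]

theorem margEnt_union_add_margEnt_inter_le {μ : (Fin n → α) → ℝ} (hμ : IsDist μ)
    (A B : Finset (Fin n)) :
    margEnt μ (A ∪ B) + margEnt μ (A ∩ B) ≤ margEnt μ A + margEnt μ B := by
  set a := marg μ A
  set b := marg μ B
  set p := marg μ (A ∪ B)
  set m := marg μ (A ∩ B)
  have hterm (x : Fin n → α) :
      μ x * (Real.log (a x) + Real.log (b x) - Real.log (p x) - Real.log (m x))
        ≤ μ x * (a x * b x / (p x * m x)) - μ x := by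
    rcases (hμ.1 x).eq_or_lt with hx | hx
    · simp [← hx]
    have ha := hx.trans_le (le_marg hμ.1 A x)
    have hb := hx.trans_le (le_marg hμ.1 B x)
    have hp := hx.trans_le (le_marg hμ.1 (A ∪ B) x)
    have hm := hx.trans_le (le_marg hμ.1 (A ∩ B) x)
    have hlog : Real.log (a x) + Real.log (b x) - Real.log (p x) - Real.log (m x)
        = Real.log (a x * b x / (p x * m x)) := by
      rw [Real.log_div (by positivity) (by positivity), Real.log_mul ha.ne' hb.ne',
        Real.log_mul hp.ne' hm.ne']
      ring
    rw [hlog, ← mul_sub_one]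
    exact mul_le_mul_of_nonneg_left (Real.log_le_sub_one_of_pos (by positivity)) hx.le
  have hsum : ∑ x, μ x * (Real.log (a x) + Real.log (b x) - Real.log (p x) - Real.log (m x))
      ≤ 0 := calc
    _ ≤ ∑ x, (μ x * (a x * b x / (p x * m x)) - μ x) := sum_le_sum fun x _ => hterm x
    _ = ∑ x, μ x * (a x * b x / (p x * m x)) - 1 := by rw [sum_sub_distrib, hμ.2]
    _ ≤ 0 := sub_nonpos.mpr (sum_mul_marg_div_marg_le_one hμ A B)
  simp only [mul_add, mul_sub, sum_add_distrib, sum_sub_distrib] at hsum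
  simp only [margEnt_eq_neg_sum]
  linarith

theorem condTC_sdiff_self (μ : (Fin n → α) → ℝ) (F S : Finset (Fin n)) :
    condTC μ (F \ S) S = condTC μ F S := by
  have hS : ∀ i ∈ F, i ∉ F \ S → condEnt μ {i} S = 0 := fun i hiF hi => by
    have hiS : i ∈ S := by simpa [hiF] using hi
    rw [condEnt, union_eq_right.mpr (singleton_subset_iff.mpr hiS), sub_self]
  rw [condTC, condTC, condEnt, condEnt, sdiff_union_self_eq_union,
    sum_subset sdiff_subset hS]

theorem condTC_le_condTC_insert {μ : (Fin n → α) → ℝ} (hμ : IsDist μ) {E S : Finset (Fin n)}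
    {i : Fin n} (hiE : i ∉ E) (hiS : i ∉ S) :
    condTC μ E S ≤ condTC μ (insert i E) S := by
  have hsub := margEnt_union_add_margEnt_inter_le hμ (insert i S) (E ∪ S)
  have hunion : insert i S ∪ (E ∪ S) = insert i E ∪ S := by
    ext j; simp only [mem_union, mem_insert]; tauto
  have hinter : insert i S ∩ (E ∪ S) = S := by
    ext j
    simp only [mem_inter, mem_union, mem_insert]
    constructor
    · rintro ⟨rfl | hj, hj'⟩
      · exact hj'.resolve_left hiE
      · exact hj
    · exact fun hj => ⟨.inr hj, .inr hj⟩
  rw [hunion, hinter] at hsub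
  simp only [condTC, condEnt, sum_insert hiE, ← insert_eq]
  linarith

theorem condTC_mono {μ : (Fin n → α) → ℝ} (hμ : IsDist μ) {E F S : Finset (Fin n)}
    (hEF : E ⊆ F) (hFS : Disjoint F S) : condTC μ E S ≤ condTC μ F S := by
  suffices ∀ D : Finset (Fin n), Disjoint D S → condTC μ E S ≤ condTC μ (E ∪ D) S by
    simpa [union_eq_right.mpr hEF] using this F hFS
  intro D
  induction D using Finset.induction_on with
  | empty => simp
  | insert i D hiD ih =>
    intro hDS
    obtain ⟨hiS, hDS⟩ := disjoint_insert_left.mp hDS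
    rw [union_insert]
    by_cases hi : i ∈ E ∪ D
    · rw [insert_eq_of_mem hi]
      exact ih hDS
    · exact (ih hDS).trans (condTC_le_condTC_insert hμ hi hiS)

section Averaging

variable {ι : Type*} [DecidableEq ι]

theorem Finset.sum_powersetCard_sum_sdiff (U : Finset ι) (j : ℕ) (g : ι → Finset ι → ℝ) :
    ∑ E ∈ U.powersetCard j, ∑ a ∈ U \ E, g a (insert a E)
      = ∑ F ∈ U.powersetCard (j + 1), ∑ a ∈ F, g a F := by
  rw [sum_sigma', sum_sigma']
  refine sum_nbij' (fun p => ⟨insert p.2 p.1, p.2⟩) (fun p => ⟨p.1.erase p.2, p.2⟩)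
    ?_ ?_ ?_ ?_ fun _ _ => rfl
  · rintro ⟨E, a⟩ h
    simp only [mem_sigma, mem_powersetCard, mem_sdiff] at h ⊢
    exact ⟨⟨insert_subset h.2.1 h.1.1, by rw [card_insert_of_notMem h.2.2, h.1.2]⟩,
      mem_insert_self _ _⟩
  · rintro ⟨F, a⟩ h
    simp only [mem_sigma, mem_powersetCard, mem_sdiff] at h ⊢
    exact ⟨⟨(erase_subset _ _).trans h.1.1, by rw [card_erase_of_mem h.2, h.1.2]; rfl⟩,
      h.1.1 h.2, notMem_erase _ _⟩
  · rintro ⟨E, a⟩ h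
    simp only [mem_sigma, mem_sdiff] at h
    simp [erase_insert h.2.2]
  · rintro ⟨F, a⟩ h
    simp only [mem_sigma] at h
    simp [insert_erase h.2]

theorem Finset.sum_powersetCard_succ_insert {U : Finset ι} {s : ι} (hs : s ∉ U) (j : ℕ)
    (G : Finset ι → ℝ) :
    ∑ F ∈ (insert s U).powersetCard (j + 1), G F
      = ∑ F ∈ U.powersetCard (j + 1), G F + ∑ E ∈ U.powersetCard j, G (insert s E) := by
  have hsE {E : Finset ι} {i : ℕ} (hE : E ∈ U.powersetCard i) : s ∉ E :=
    fun h => hs ((mem_powersetCard.mp hE).1 h)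
  rw [powersetCard_succ_insert hs, sum_union, sum_image]
  · intro E hE E' hE' h
    rw [← erase_insert (hsE hE), ← erase_insert (hsE hE')]
    exact congrArg (·.erase s) h
  · refine disjoint_left.mpr fun F hF hF' => ?_
    obtain ⟨E, -, rfl⟩ := mem_image.mp hF'
    exact hsE hF (mem_insert_self s E)

variable {U : Finset ι} {G : Finset ι → ℝ}

theorem sum_powersetCard_div_choose_le_succ (hG : ∀ E F, E ⊆ F → F ⊆ U → G E ≤ G F) {j : ℕ}
    (hj : j < #U) :
    (∑ E ∈ U.powersetCard j, G E) / (#U).choose j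
      ≤ (∑ F ∈ U.powersetCard (j + 1), G F) / (#U).choose (j + 1) := by
  have hcount : ((#U - j : ℕ) : ℝ) * ∑ E ∈ U.powersetCard j, G E
      ≤ (j + 1) * ∑ F ∈ U.powersetCard (j + 1), G F := calc
    _ = ∑ E ∈ U.powersetCard j, ∑ a ∈ U \ E, G E := by
        rw [mul_sum]
        refine sum_congr rfl fun E hE => ?_
        rw [mem_powersetCard] at hE
        rw [sum_const, card_sdiff_of_subset hE.1, hE.2, nsmul_eq_mul]
    _ ≤ ∑ E ∈ U.powersetCard j, ∑ a ∈ U \ E, G (insert a E) := by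
        refine sum_le_sum fun E hE => sum_le_sum fun a ha => ?_
        rw [mem_powersetCard] at hE
        exact hG _ _ (subset_insert a E)
          (insert_subset (mem_sdiff.mp ha).1 hE.1)
    _ = ∑ F ∈ U.powersetCard (j + 1), ∑ a ∈ F, G F :=
        Finset.sum_powersetCard_sum_sdiff U j fun _ F => G F
    _ = (j + 1) * ∑ F ∈ U.powersetCard (j + 1), G F := by
        rw [mul_sum]
        refine sum_congr rfl fun F hF => ?_
        rw [sum_const, (mem_powersetCard.mp hF).2, nsmul_eq_mul]
        push_cast; ring
  have hchoose : ((#U).choose (j + 1) : ℝ) * (j + 1)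
      = (#U).choose j * ((#U - j : ℕ) : ℝ) := by
    exact_mod_cast Nat.choose_succ_right_eq #U j
  have hCj : (0 : ℝ) < (#U).choose j := by exact_mod_cast Nat.choose_pos hj.le
  have hCj1 : (0 : ℝ) < (#U).choose (j + 1) := by exact_mod_cast Nat.choose_pos hj
  rw [div_le_div_iff₀ hCj hCj1]
  refine le_of_mul_le_mul_right ?_ (by positivity : (0 : ℝ) < j + 1)
  calc _ = ((#U).choose j : ℝ) * (((#U - j : ℕ) : ℝ) * ∑ E ∈ U.powersetCard j, G E) := by
        rw [mul_assoc, hchoose]; ring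
    _ ≤ ((#U).choose j : ℝ) * ((j + 1) * ∑ F ∈ U.powersetCard (j + 1), G F) := by gcongr
    _ = _ := by ring

theorem sum_powersetCard_insert_div_choose_le {s : ι} (hs : s ∉ U)
    (hG : ∀ E F, E ⊆ F → F ⊆ U → G E ≤ G F) (hGs : ∀ E ⊆ U, G (insert s E) = G E)
    {k : ℕ} (hk : k ≤ #U) :
    (∑ F ∈ (insert s U).powersetCard k, G F) / (#(insert s U)).choose k
      ≤ (∑ F ∈ U.powersetCard k, G F) / (#U).choose k := by
  cases k with
  | zero => simp
  | succ j =>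
    have hstep := sum_powersetCard_div_choose_le_succ hG hk
    rw [card_insert_of_notMem hs, Finset.sum_powersetCard_succ_insert hs,
      sum_congr rfl fun E hE => hGs E (mem_powersetCard.mp hE).1,
      Nat.choose_succ_succ', Nat.cast_add, add_comm ((#U).choose j : ℝ)]
    have hCj : (0 : ℝ) < (#U).choose j := by exact_mod_cast Nat.choose_pos (by omega)
    have hCj1 : (0 : ℝ) < (#U).choose (j + 1) := by exact_mod_cast Nat.choose_pos hk
    rw [div_le_div_iff₀ hCj hCj1] at hstep
    rw [div_le_div_iff₀ (by positivity) hCj1]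
    linarith

theorem sum_powersetCard_inter_div_choose_le {S W : Finset ι} (hSW : Disjoint S W)
    {T : Finset ι → ℝ} (hT : ∀ E F, E ⊆ F → F ⊆ W → T E ≤ T F) {k : ℕ} (hk : k ≤ #W) :
    (∑ F ∈ (S ∪ W).powersetCard k, T (F ∩ W)) / (#(S ∪ W)).choose k
      ≤ (∑ E ∈ W.powersetCard k, T E) / (#W).choose k := by
  induction S using Finset.induction_on with
  | empty =>
    rw [empty_union]
    refine le_of_eq (congrArg (· / _) (sum_congr rfl fun F hF => ?_))
    rw [inter_eq_left.mpr (mem_powersetCard.mp hF).1]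
  | insert s S hsS ih =>
    obtain ⟨hsW, hSW⟩ := disjoint_insert_left.mp hSW
    rw [insert_union]
    refine (sum_powersetCard_insert_div_choose_le (by simp [hsS, hsW]) ?_ ?_
      (hk.trans (card_le_card subset_union_right))).trans (ih hSW)
    · exact fun E F hEF _ => hT _ _ (inter_subset_inter_right hEF) inter_subset_right
    · exact fun E _ => by rw [insert_inter_of_notMem hsW]

end Averaging

/-- Averaging inequality: for `S` of size `t` and `k ≤ n − t`, the average of `C(X_F | X_S)` over
uniform `k`-subsets `F` of `V` is at most the average over uniform `k`-subsets of `V ∖ S`. -/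
theorem avg_tc_le_avg_tc_complement (μ : (Fin n → α) → ℝ) (hμ : IsDist μ)
    (t k : ℕ) (S : Finset (Fin n)) (hS : S.card = t) (hk : k ≤ n - t) :
    (∑ F ∈ Finset.powersetCard k (Finset.univ : Finset (Fin n)), condTC μ F S)
        / (n.choose k : ℝ)
      ≤ (∑ E ∈ Finset.powersetCard k ((Finset.univ : Finset (Fin n)) \ S), condTC μ E S)
          / ((n - t).choose k : ℝ) := by
  have hW : #(univ \ S) = n - t := by
    rw [card_sdiff_of_subset (subset_univ S), card_univ, Fintype.card_fin, hS]
  have key := sum_powersetCard_inter_div_choose_le disjoint_sdiff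
    (T := fun E => condTC μ E S)
    (fun E F hEF hF => condTC_mono hμ hEF (subset_sdiff.mp hF).2) (hW ▸ hk)
  rw [union_sdiff_of_subset (subset_univ S), card_univ, Fintype.card_fin, hW] at key
  simpa only [← inter_sdiff_assoc, inter_univ, condTC_sdiff_self] using key

end
end
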